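/- Let f be a symmetric norm on ℝ^n with f(e_1) = 1 (so that ‖·‖_f is a submultiplicative cross norm), and let ‖·‖_f be the induced unitarily invariant norm on B(H). Then two nonzero operators A, B ∈ B(H) satisfy ‖AB‖_f = ‖A‖_f · ‖B‖_f if and only if s_1(AB) = ‖A‖_f · ‖B‖_f. -/

import Mathlib

open scoped InnerProductSpace

variable {H : Type*} [NormedAddCommGroup H] [InnerProductSpace ℂ H] [CompleteSpace H]

/-- The `k`-th singular value (1-indexed) of a bounded operator `A`:
`s_k(A) = inf {‖A - X‖ : rank X < k}`. -/
noncomputable def sval (k : ℕ) (A : H →L[ℂ] H) : ℝ :=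
  sInf { r : ℝ | ∃ X : H →L[ℂ] H,
    Module.rank ℂ (LinearMap.range (X : H →ₗ[ℂ] H)) < (k : Cardinal) ∧ r = ‖A - X‖ }

/-- `f : ℝ^n → ℝ` is a symmetric norm: a norm invariant under permutations of the
coordinates and under sign changes of the coordinates. -/
structure IsSymmetricNorm (n : ℕ) (f : (Fin n → ℝ) → ℝ) : Prop where
  triangle : ∀ x y, f (x + y) ≤ f x + f y
  homog : ∀ (t : ℝ) (x), f (t • x) = |t| * f x
  definite : ∀ x, x ≠ 0 → 0 < f x
  perm_invariant : ∀ (σ : Equiv.Perm (Fin n)) (x), f (fun i => x (σ i)) = f x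
  sign_invariant : ∀ (ε : Fin n → ℝ), (∀ i, ε i = 1 ∨ ε i = -1) →
    ∀ x, f (fun i => ε i * x i) = f x

/-- The unitarily invariant norm induced by a symmetric norm `f` on `ℝ^n`:
`‖A‖_f = f (s_1(A), …, s_n(A))`. -/
noncomputable def normf (n : ℕ) (f : (Fin n → ℝ) → ℝ) (A : H →L[ℂ] H) : ℝ :=
  f (fun j : Fin n => sval (j.1 + 1) A)

/-! The bounds `s₁(AB) ≤ ‖AB‖_f ≤ ‖A‖ ‖B‖_f ≤ ‖A‖_f ‖B‖_f` (and symmetrically) give one direction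
and, under `‖AB‖_f = ‖A‖_f ‖B‖_f`, force `‖A‖_f = ‖A‖` and `‖B‖_f = ‖B‖`. If then
`s₁(AB) < ‖A‖ ‖B‖`, the vector `s(AB)` lies below `‖A‖ s(B)` and strictly below its first entry;
testing both against a nonnegative supporting functional of `f` at `s(AB)` and swapping two
coordinates shows that this forces `‖AB‖_f < ‖A‖ ‖B‖_f`. -/

theorem sum_mul_comp_swap {ι R : Type*} [Fintype ι] [DecidableEq ι] [CommRing R]
    (d y : ι → R) (i m : ι) :
    ∑ j, d j * y (Equiv.swap i m j) = ∑ j, d j * y j + (d m - d i) * (y i - y m) := by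
  rcases eq_or_ne i m with rfl | him
  · simp
  rw [← sub_eq_iff_eq_add', ← Finset.sum_sub_distrib,
    Fintype.sum_eq_add i m him fun j hj => by simp [Equiv.swap_apply_of_ne_of_ne hj.1 hj.2]]
  simp only [Equiv.swap_apply_left, Equiv.swap_apply_right]
  ring

namespace IsSymmetricNorm

variable {n : ℕ} {f : (Fin n → ℝ) → ℝ}

theorem apply_zero (hf : IsSymmetricNorm n f) : f 0 = 0 := by
  simpa using hf.homog 0 0

theorem nonneg (hf : IsSymmetricNorm n f) (x : Fin n → ℝ) : 0 ≤ f x := by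
  have hneg : f (-x) = f x := by simpa using hf.homog (-1) x
  have h := hf.triangle x (-x)
  rw [add_neg_cancel, hf.apply_zero, hneg] at h
  linarith

theorem exists_dual (hf : IsSymmetricNorm n f) {x : Fin n → ℝ} (hx : x ≠ 0) :
    ∃ φ : (Fin n → ℝ) →ₗ[ℝ] ℝ, φ x = f x ∧ ∀ u, φ u ≤ f u := by
  let φ₀ : (Fin n → ℝ) →ₗ.[ℝ] ℝ := LinearPMap.mkSpanSingleton x (f x) hx
  have hφ₀ : ∀ z : φ₀.domain, φ₀ z ≤ f z := by
    rintro ⟨z, hz⟩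
    obtain ⟨c, rfl⟩ := Submodule.mem_span_singleton.mp hz
    rw [LinearPMap.mkSpanSingleton'_apply, hf.homog, smul_eq_mul]
    exact mul_le_mul_of_nonneg_right (le_abs_self c) (hf.nonneg x)
  obtain ⟨φ, hφφ₀, hφ⟩ := exists_extension_of_le_sublinear φ₀ f
    (fun c hc u => by rw [hf.homog, abs_of_pos hc]) hf.triangle hφ₀
  refine ⟨φ, ?_, hφ⟩
  rw [hφφ₀ ⟨x, Submodule.mem_span_singleton_self x⟩]
  exact LinearPMap.mkSpanSingleton_apply ℝ ℝ hx (f x)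

/-- Sign invariance lets the coefficients of a supporting functional be taken nonnegative. -/
theorem exists_nonneg_dual (hf : IsSymmetricNorm n f) {x : Fin n → ℝ} (hx : x ≠ 0) :
    ∃ d : Fin n → ℝ, 0 ≤ d ∧ (∀ u, ∑ j, d j * |u j| ≤ f u) ∧ ∑ j, d j * |x j| = f x := by
  classical
  obtain ⟨φ, hφx, hφ⟩ := hf.exists_dual hx
  set e : Fin n → ℝ := fun j => φ fun k => if j = k then 1 else 0
  have hφe : ∀ u, φ u = ∑ j, u j * e j := fun u => φ.pi_apply_eq_sum_univ u
  have hbound : ∀ u, ∑ j, |e j| * |u j| ≤ f u := by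
    intro u
    set ε : Fin n → ℝ := fun j => if 0 ≤ u j * e j then 1 else -1
    have hε : ∀ j, ε j = 1 ∨ ε j = -1 := fun j => by by_cases h : 0 ≤ u j * e j <;> simp [ε, h]
    calc ∑ j, |e j| * |u j| = φ fun j => ε j * u j := by
          rw [hφe]
          refine Finset.sum_congr rfl fun j _ => ?_
          by_cases h : 0 ≤ u j * e j
          · simp [ε, h, ← abs_mul, mul_comm, abs_of_nonneg h]
          · simp [ε, h, ← abs_mul, mul_comm, abs_of_neg (not_le.mp h)]
      _ ≤ f fun j => ε j * u j := hφ _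
      _ = f u := hf.sign_invariant ε hε u
  refine ⟨fun j => |e j|, fun j => abs_nonneg _, hbound, le_antisymm (hbound x) ?_⟩
  rw [← hφx, hφe]
  exact Finset.sum_le_sum fun j _ => by
    rw [mul_comm, ← abs_mul, mul_comm]; exact le_abs_self _

theorem apply_le_of_abs_le (hf : IsSymmetricNorm n f) {x y : Fin n → ℝ}
    (hxy : ∀ j, |x j| ≤ |y j|) : f x ≤ f y := by
  rcases eq_or_ne x 0 with rfl | hx
  · rw [hf.apply_zero]; exact hf.nonneg y
  obtain ⟨d, hd, hdf, hdx⟩ := hf.exists_nonneg_dual hx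
  calc f x = ∑ j, d j * |x j| := hdx.symm
    _ ≤ ∑ j, d j * |y j| := Finset.sum_le_sum fun j _ => mul_le_mul_of_nonneg_left (hxy j) (hd j)
    _ ≤ f y := hdf y

theorem apply_le_of_nonneg_of_le (hf : IsSymmetricNorm n f) {x y : Fin n → ℝ}
    (hx : 0 ≤ x) (hxy : x ≤ y) : f x ≤ f y :=
  hf.apply_le_of_abs_le fun j => by
    rw [abs_of_nonneg (hx j), abs_of_nonneg ((hx j).trans (hxy j))]; exact hxy j

theorem abs_apply_le (hf : IsSymmetricNorm n f) {i₀ : Fin n}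
    (h₀ : f (Pi.single i₀ 1) = 1) (x : Fin n → ℝ) (i : Fin n) : |x i| ≤ f x := by
  have hi : f (Pi.single i 1) = 1 := by
    rw [← hf.perm_invariant (Equiv.swap i i₀)]
    convert h₀ using 2
    ext k; simp [Pi.single_apply, Equiv.swap_apply_eq_iff]
  calc |x i| = f (x i • Pi.single i 1) := by rw [hf.homog, hi, mul_one]
    _ ≤ f x := hf.apply_le_of_abs_le fun j => by
      rcases eq_or_ne j i with rfl | hj <;> simp [*]

theorem apply_lt_of_le_of_forall_lt (hf : IsSymmetricNorm n f) {x y : Fin n → ℝ}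
    (hx : 0 ≤ x) (hxy : x ≤ y) {i : Fin n} (hi : ∀ j, x j < y i) : f x < f y := by
  by_contra! hyx
  have hy : 0 < f y := hf.definite y fun h => by simpa [h] using (hx i).trans_lt (hi i)
  have hx0 : x ≠ 0 := by rintro rfl; rw [hf.apply_zero] at hyx; linarith
  obtain ⟨d, hd, hdf, hdx⟩ := hf.exists_nonneg_dual hx0
  have habs : ∀ j, |x j| = x j ∧ |y j| = y j := fun j =>
    ⟨abs_of_nonneg (hx j), abs_of_nonneg ((hx j).trans (hxy j))⟩
  simp only [fun j => (habs j).1] at hdx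
  have hdy : ∑ j, d j * y j ≤ f y := by simpa only [fun j => (habs j).2] using hdf y
  have hdxy : ∑ j, d j * x j ≤ ∑ j, d j * y j :=
    Finset.sum_le_sum fun j _ => mul_le_mul_of_nonneg_left (hxy j) (hd j)
  have hgap : ∀ j, d j * (y j - x j) = 0 := by
    have hsum : ∑ j, d j * (y j - x j) = 0 := by
      refine le_antisymm ?_ (Finset.sum_nonneg fun j _ => mul_nonneg (hd j) (sub_nonneg.2 (hxy j)))
      simp only [mul_sub, Finset.sum_sub_distrib]
      linarith
    simpa using (Finset.sum_eq_zero_iff_of_nonneg fun j _ =>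
      mul_nonneg (hd j) (sub_nonneg.2 (hxy j))).1 hsum
  obtain ⟨m, -, hm⟩ := Finset.exists_ne_zero_of_sum_ne_zero (hdx.trans_ne (by linarith))
  have hdm : d m ≠ 0 := left_ne_zero_of_mul hm
  have hym : y m = x m := by linarith [(mul_eq_zero.1 (hgap m)).resolve_left hdm]
  have hdi : d i = 0 := (mul_eq_zero.1 (hgap i)).resolve_right (sub_ne_zero.2 (hi i).ne')
  -- swapping `y i` and `y m` strictly increases the pairing with `d`, but not `f y`
  have := hdf fun j => y (Equiv.swap i m j)
  simp only [fun j => (habs (Equiv.swap i m j)).2, hf.perm_invariant, sum_mul_comp_swap, hdi,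
    sub_zero] at this
  have := mul_pos ((hd m).lt_of_ne' hdm) (sub_pos.2 (hym ▸ hi m))
  linarith

end IsSymmetricNorm

section SingularValues

variable {E : Type*} [NormedAddCommGroup E] [InnerProductSpace ℂ E]

theorem sval_eq_iInf (k : ℕ) (A : E →L[ℂ] E) :
    sval k A = ⨅ X : {X : E →L[ℂ] E // (X : E →ₗ[ℂ] E).rank < k}, ‖A - X‖ := by
  rw [sval, iInf, Set.range]
  congr 1
  ext r
  exact ⟨fun ⟨X, hX, hr⟩ => ⟨⟨X, hX⟩, hr.symm⟩, fun ⟨X, hr⟩ => ⟨X, X.2, hr.symm⟩⟩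

theorem nonempty_rank_lt {k : ℕ} (hk : 0 < k) :
    Nonempty {X : E →L[ℂ] E // (X : E →ₗ[ℂ] E).rank < k} :=
  ⟨⟨0, by simpa using hk⟩⟩

theorem bddBelow_range_norm_sub (A : E →L[ℂ] E) (k : ℕ) :
    BddBelow (Set.range fun X : {X : E →L[ℂ] E // (X : E →ₗ[ℂ] E).rank < k} => ‖A - X‖) :=
  ⟨0, Set.forall_mem_range.2 fun _ => norm_nonneg _⟩

theorem sval_nonneg (k : ℕ) (A : E →L[ℂ] E) : 0 ≤ sval k A := by
  rw [sval_eq_iInf]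
  exact Real.iInf_nonneg fun _ => norm_nonneg _

theorem sval_one (A : E →L[ℂ] E) : sval 1 A = ‖A‖ := by
  have hzero : ∀ X : {X : E →L[ℂ] E // (X : E →ₗ[ℂ] E).rank < (1 : ℕ)}, (X : E →L[ℂ] E) = 0 := by
    rintro ⟨X, hX⟩
    rw [Nat.cast_one, Cardinal.lt_one_iff, LinearMap.rank, Submodule.rank_eq_zero,
      LinearMap.range_eq_bot] at hX
    exact ContinuousLinearMap.coe_injective hX
  have := nonempty_rank_lt (E := E) one_pos
  rw [sval_eq_iInf]
  refine le_antisymm ((ciInf_le (bddBelow_range_norm_sub A 1) ⟨0, by simp⟩).trans_eq (by simp))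
    (le_ciInf fun X => by rw [hzero X, sub_zero])

theorem sval_antitone {k m : ℕ} (hk : 0 < k) (hkm : k ≤ m) (A : E →L[ℂ] E) :
    sval m A ≤ sval k A := by
  have := nonempty_rank_lt (E := E) hk
  rw [sval_eq_iInf, sval_eq_iInf]
  exact le_ciInf fun X =>
    ciInf_le (bddBelow_range_norm_sub A m) ⟨X, X.2.trans_le (by exact_mod_cast hkm)⟩

theorem sval_comp_le_left {k : ℕ} (hk : 0 < k) (A B : E →L[ℂ] E) :
    sval k (A ∘L B) ≤ ‖A‖ * sval k B := by
  have := nonempty_rank_lt (E := E) hk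
  rw [sval_eq_iInf, sval_eq_iInf, Real.mul_iInf_of_nonneg (norm_nonneg A)]
  refine le_ciInf fun X => (ciInf_le (bddBelow_range_norm_sub _ k) ⟨A ∘L X, ?_⟩).trans ?_
  · rw [ContinuousLinearMap.toLinearMap_comp]
    exact (LinearMap.rank_comp_le_right _ _).trans_lt X.2
  · rw [← ContinuousLinearMap.comp_sub]
    exact ContinuousLinearMap.opNorm_comp_le _ _

theorem sval_comp_le_right {k : ℕ} (hk : 0 < k) (A B : E →L[ℂ] E) :
    sval k (A ∘L B) ≤ sval k A * ‖B‖ := by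
  have := nonempty_rank_lt (E := E) hk
  rw [sval_eq_iInf, sval_eq_iInf, mul_comm, Real.mul_iInf_of_nonneg (norm_nonneg B)]
  refine le_ciInf fun X => (ciInf_le (bddBelow_range_norm_sub _ k) ⟨X ∘L B, ?_⟩).trans ?_
  · rw [ContinuousLinearMap.toLinearMap_comp]
    exact (LinearMap.rank_comp_le_left _ _).trans_lt X.2
  · rw [← ContinuousLinearMap.sub_comp, mul_comm]
    exact ContinuousLinearMap.opNorm_comp_le _ _

noncomputable def singularValues (n : ℕ) (A : E →L[ℂ] E) : Fin n → ℝ := fun j => sval (j + 1) A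

theorem singularValues_nonneg (n : ℕ) (A : E →L[ℂ] E) : 0 ≤ singularValues n A :=
  fun _ => sval_nonneg _ _

theorem singularValues_antitone (n : ℕ) (A : E →L[ℂ] E) : Antitone (singularValues n A) :=
  fun _ _ hij => sval_antitone (Nat.succ_pos _) (Nat.succ_le_succ hij) A

theorem singularValues_zero {n : ℕ} (hn : 0 < n) (A : E →L[ℂ] E) :
    singularValues n A ⟨0, hn⟩ = ‖A‖ :=
  sval_one A

theorem singularValues_comp_le_left (n : ℕ) (A B : E →L[ℂ] E) :
    singularValues n (A ∘L B) ≤ ‖A‖ • singularValues n B :=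
  fun _ => sval_comp_le_left (Nat.succ_pos _) A B

theorem singularValues_comp_le_right (n : ℕ) (A B : E →L[ℂ] E) :
    singularValues n (A ∘L B) ≤ ‖B‖ • singularValues n A :=
  fun _ => (sval_comp_le_right (Nat.succ_pos _) A B).trans_eq (mul_comm _ _)

end SingularValues

section NormF

variable {E : Type*} [NormedAddCommGroup E] [InnerProductSpace ℂ E]
  {n : ℕ} {f : (Fin n → ℝ) → ℝ}

theorem normf_eq (A : E →L[ℂ] E) : normf n f A = f (singularValues n A) := rfl

theorem norm_le_normf (hf : IsSymmetricNorm n f) {i₀ : Fin n}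
    (h₀ : f (Pi.single i₀ 1) = 1) (A : E →L[ℂ] E) : ‖A‖ ≤ normf n f A := by
  rw [← singularValues_zero i₀.pos A, normf_eq]
  exact (le_abs_self _).trans (hf.abs_apply_le h₀ _ _)

theorem normf_comp_le_left (hf : IsSymmetricNorm n f) (A B : E →L[ℂ] E) :
    normf n f (A ∘L B) ≤ ‖A‖ * normf n f B := by
  rw [normf_eq, normf_eq, ← abs_norm, ← hf.homog]
  exact hf.apply_le_of_nonneg_of_le (singularValues_nonneg n _) (singularValues_comp_le_left n A B)

theorem normf_comp_le_right (hf : IsSymmetricNorm n f) (A B : E →L[ℂ] E) :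
    normf n f (A ∘L B) ≤ normf n f A * ‖B‖ := by
  rw [normf_eq, normf_eq, mul_comm, ← abs_norm, ← hf.homog]
  exact hf.apply_le_of_nonneg_of_le (singularValues_nonneg n _) (singularValues_comp_le_right n A B)

theorem normf_comp_lt_of_norm_comp_lt (hf : IsSymmetricNorm n f) (hn : 0 < n) {A B : E →L[ℂ] E}
    (h : ‖A ∘L B‖ < ‖A‖ * ‖B‖) : normf n f (A ∘L B) < ‖A‖ * normf n f B := by
  rw [normf_eq, normf_eq, ← abs_norm, ← hf.homog]
  refine hf.apply_lt_of_le_of_forall_lt (singularValues_nonneg n _)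
    (singularValues_comp_le_left n A B) (i := ⟨0, hn⟩) fun j => ?_
  calc singularValues n (A ∘L B) j ≤ singularValues n (A ∘L B) ⟨0, hn⟩ :=
        singularValues_antitone n _ (Nat.zero_le j)
    _ = ‖A ∘L B‖ := singularValues_zero hn _
    _ < ‖A‖ * ‖B‖ := h
    _ = (‖A‖ • singularValues n B) ⟨0, hn⟩ := by rw [Pi.smul_apply, singularValues_zero, smul_eq_mul]

end NormF

theorem stmt9_general (n : ℕ) (hn : 0 < n)
    (f : (Fin n → ℝ) → ℝ) (hf : IsSymmetricNorm n f)
    (hcross : f (Pi.single (⟨0, hn⟩ : Fin n) 1 : Fin n → ℝ) = 1) :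
    ∀ A B : H →L[ℂ] H, A ≠ 0 → B ≠ 0 →
      (normf n f (A ∘L B) = normf n f A * normf n f B ↔
        sval 1 (A ∘L B) = normf n f A * normf n f B) := by
  intro A B hA hB
  have hnA := norm_le_normf hf hcross A
  have hnB := norm_le_normf hf hcross B
  have hfA : 0 < normf n f A := (norm_pos_iff.2 hA).trans_le hnA
  have hfB : 0 < normf n f B := (norm_pos_iff.2 hB).trans_le hnB
  have hleft := normf_comp_le_left hf A B
  rw [sval_one]
  constructor
  · intro h
    have hA' : ‖A‖ = normf n f A :=
      le_antisymm hnA (le_of_mul_le_mul_right (h ▸ hleft) hfB)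
    have hB' : ‖B‖ = normf n f B :=
      le_antisymm hnB (le_of_mul_le_mul_left (h ▸ normf_comp_le_right hf A B) hfA)
    rw [← hA', ← hB']
    refine (ContinuousLinearMap.opNorm_comp_le A B).eq_of_not_lt fun hlt => ?_
    have := normf_comp_lt_of_norm_comp_lt hf hn hlt
    rw [h, hA'] at this
    exact lt_irrefl _ this
  · intro h
    exact le_antisymm (hleft.trans (mul_le_mul_of_nonneg_right hnA hfB.le))
      (h ▸ norm_le_normf hf hcross (A ∘L B))

theorem stmt9 (n : ℕ) (hn : 0 < n) (hdim : (n : Cardinal) ≤ Module.rank ℂ H)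
    (f : (Fin n → ℝ) → ℝ) (hf : IsSymmetricNorm n f)
    (hcross : f (Pi.single (⟨0, hn⟩ : Fin n) 1 : Fin n → ℝ) = 1) :
    ∀ A B : H →L[ℂ] H, A ≠ 0 → B ≠ 0 →
      (normf n f (A ∘L B) = normf n f A * normf n f B ↔
        sval 1 (A ∘L B) = normf n f A * normf n f B) :=
  stmt9_general n hn f hf hcross
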